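/- Let C > 0 and 0 < α < 1 be real constants, and let y : [0,∞) → ℝ be a differentiable function with y(t) > 0 for all t ≥ 0, satisfying the differential inequalities C·y(t) ≥ y'(t) ≥ C·y(t) − y(t)^α for all t ≥ 0. Then for every t ≥ 0 one has y(t) ≥ (y(0) − y(0)^α/(C(1−α)))·e^{C·t}. -/

import Mathlib

/-!
Put `u t = y t * exp (-C t)`, so that `u' = (y' - C y) exp (-C t)`. The upper inequality makes
`u` antitone, i.e. `y t ≤ y 0 exp (C t)` (Grönwall), hence `y t ^ α ≤ y 0 ^ α exp (α C t)`.
Fed into the lower inequality this gives `u' ≥ -y 0 ^ α exp (-(1 - α) C t)`, whose right-hand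
side has total integral `-y 0 ^ α / (C (1 - α))` over `[0, ∞)`.
-/

open Real Set

theorem HasDerivWithinAt.mul_exp_neg_mul {f : ℝ → ℝ} {f' C t : ℝ} {s : Set ℝ}
    (hf : HasDerivWithinAt f f' s t) :
    HasDerivWithinAt (fun t ↦ f t * Real.exp (-C * t)) ((f' - C * f t) * Real.exp (-C * t)) s t :=
  (hf.mul ((hasDerivAt_id' t).const_mul (-C)).exp.hasDerivWithinAt).congr_deriv (by ring)

theorem monotoneOn_Ici_of_hasDerivWithinAt_nonneg {f f' : ℝ → ℝ} {a : ℝ}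
    (hf : ∀ t, a ≤ t → HasDerivWithinAt f (f' t) (Ici a) t)
    (hf'₀ : ∀ t, a < t → 0 ≤ f' t) : MonotoneOn f (Ici a) := by
  refine monotoneOn_of_hasDerivWithinAt_nonneg (f' := f') (convex_Ici a)
    (fun t ht ↦ (hf t ht).continuousWithinAt) ?_ ?_ <;> rw [interior_Ici]
  · exact fun t ht ↦ (hf t ht.le).mono Ioi_subset_Ici_self
  · exact hf'₀

section

variable {C : ℝ} {y y' : ℝ → ℝ}

theorem le_mul_exp_of_hasDerivWithinAt_le
    (hderiv : ∀ t, 0 ≤ t → HasDerivWithinAt y (y' t) (Ici 0) t)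
    (hle : ∀ t, 0 ≤ t → y' t ≤ C * y t) :
    ∀ t, 0 ≤ t → y t ≤ y 0 * exp (C * t) := by
  intro t ht
  have := le_gronwallBound_of_liminf_deriv_right_le (ε := 0) (a := 0) (b := t)
    (fun x hx ↦ (hderiv x hx.1).continuousWithinAt.mono Icc_subset_Ici_self)
    (fun x hx _ hr ↦ ((hderiv x hx.1).mono (Ici_subset_Ici.2 hx.1)).liminf_right_slope_le hr)
    le_rfl (fun x hx ↦ by simpa using hle x hx.1) t ⟨ht, le_rfl⟩
  simpa [gronwallBound_ε0] using this

theorem sub_div_sub_mul_exp_le {B D : ℝ} (hDC : D < C) (hB : 0 ≤ B)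
    (hderiv : ∀ t, 0 ≤ t → HasDerivWithinAt y (y' t) (Ici 0) t)
    (hlower : ∀ t, 0 ≤ t → C * y t - B * exp (D * t) ≤ y' t) :
    ∀ t, 0 ≤ t → (y 0 - B / (C - D)) * exp (C * t) ≤ y t := by
  have hCD : C - D ≠ 0 := (sub_pos.2 hDC).ne'
  have hmono : MonotoneOn (fun t ↦ y t * exp (-C * t) - B / (C - D) * exp ((D - C) * t))
      (Ici 0) := by
    refine monotoneOn_Ici_of_hasDerivWithinAt_nonneg
      (f' := fun t ↦ (y' t - C * y t) * exp (-C * t) + B * exp ((D - C) * t))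
      (fun t ht ↦ ((hderiv t ht).mul_exp_neg_mul.sub
        ((((hasDerivAt_id' t).const_mul (D - C)).exp.hasDerivWithinAt).const_mul _)).congr_deriv
        (by field_simp; ring)) fun t ht ↦ ?_
    have hexp : exp ((D - C) * t) = exp (D * t) * exp (-C * t) := by rw [← exp_add]; ring_nf
    rw [hexp]
    nlinarith [hlower t ht.le, exp_pos (-C * t)]
  intro t ht
  have h := hmono (mem_Ici.2 le_rfl) ht ht
  simp only [mul_zero, exp_zero, mul_one] at h
  have hdecay : 0 ≤ B / (C - D) * exp ((D - C) * t) :=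
    mul_nonneg (div_nonneg hB (sub_pos.2 hDC).le) (exp_pos _).le
  have hu : y t * exp (-C * t) = y t / exp (C * t) := by rw [neg_mul, exp_neg, div_eq_mul_inv]
  rw [← le_div_iff₀ (exp_pos _)]
  linarith

end

/-- **ODE comparison lemma** (Lemma 6.9 of Connell–McReynolds–Wang, "The natural flow and the
critical exponent"). If `y : [0,∞) → ℝ` is a positive differentiable function satisfying
`C·y ≥ y' ≥ C·y − y^α` for constants `C > 0` and `0 < α < 1`, then
`y(t) ≥ (y(0) − y(0)^α/(C(1−α)))·e^{C t}` for all `t ≥ 0`. -/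
theorem ode_comparison_lemma (C α : ℝ) (hC : 0 < C) (hα0 : 0 < α) (hα1 : α < 1)
    (y y' : ℝ → ℝ)
    (hpos : ∀ t, 0 ≤ t → 0 < y t)
    (hderiv : ∀ t, 0 ≤ t → HasDerivWithinAt y (y' t) (Set.Ici 0) t)
    (hupper : ∀ t, 0 ≤ t → y' t ≤ C * y t)
    (hlower : ∀ t, 0 ≤ t → C * y t - y t ^ α ≤ y' t) :
    ∀ t, 0 ≤ t → (y 0 - y 0 ^ α / (C * (1 - α))) * Real.exp (C * t) ≤ y t := by
  have hy0 := hpos 0 le_rfl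
  have hgrowth := le_mul_exp_of_hasDerivWithinAt_le hderiv hupper
  have hpow (t : ℝ) (ht : 0 ≤ t) : y t ^ α ≤ y 0 ^ α * exp (α * C * t) :=
    calc y t ^ α ≤ (y 0 * exp (C * t)) ^ α :=
          rpow_le_rpow (hpos t ht).le (hgrowth t ht) hα0.le
      _ = y 0 ^ α * exp (α * C * t) := by
          rw [mul_rpow hy0.le (exp_pos _).le, ← exp_mul]; ring_nf
  have hαC : α * C < C := mul_lt_of_lt_one_left hC hα1
  have h := sub_div_sub_mul_exp_le hαC (rpow_nonneg hy0.le α) hderiv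
    fun t ht ↦ by linarith [hlower t ht, hpow t ht]
  intro t ht
  convert h t ht using 4
  ring
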